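/- Let A be a finite set and let n > |A|. Then the subgroup of Sym(A^n) generated by the 3-cycles (x·a·b·c·y x·b·c·a·y x·c·a·b·y) of words (a, b, c ∈ A not all equal, x, y words with |x|+|y| = n−3; the three words arise from one another by rotating three consecutive symbols) equals the set of conservative permutations of A^n whose restriction to each weight class of A^n is an even permutation of that weight class. -/

import Mathlib

/-- The weight of a word `x ∈ A^n`: the number of occurrences of each symbol. -/
def weight {A : Type*} [DecidableEq A] {n : ℕ} (x : Fin n → A) : A → ℕ :=
  fun a => (Finset.univ.filter fun i => x i = a).card

/-- A permutation of `A^n` is conservative if it preserves weights. -/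
def IsConservative {A : Type*} [DecidableEq A] {n : ℕ} (f : Equiv.Perm (Fin n → A)) : Prop :=
  ∀ x, weight (f x) = weight x

/-- A permutation of `A^n` is alternating conservative if it is conservative and its
restriction to each weight class is an even permutation of that class. -/
def AltConservative {A : Type*} [Fintype A] [DecidableEq A] {n : ℕ}
    (f : Equiv.Perm (Fin n → A)) : Prop :=
  ∃ hf : IsConservative f, ∀ w : A → ℕ,
    Equiv.Perm.sign (f.subtypePerm (p := fun x => weight x = w)
      (fun x => by simp only [hf x])) = 1

/-- The `3`-cycle of indices `i ↦ i+1 ↦ i+2 ↦ i` in `Fin n`. -/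
def rot3 {n : ℕ} (i : Fin n) (hi : (i : ℕ) + 2 < n) : Equiv.Perm (Fin n) :=
  Equiv.swap i ⟨(i : ℕ) + 1, by omega⟩ *
    Equiv.swap ⟨(i : ℕ) + 1, by omega⟩ ⟨(i : ℕ) + 2, hi⟩

/-! Call two points linked by a subgroup `G` of `Sym(β)` if they lie in a common 3-cycle of `G`.
Conjugating 3-cycles of `G` by one another shows that linkage is an equivalence relation and that
`G` contains every 3-cycle of linked points. On `Fin n`, consecutive positions are linked by the
consecutive 3-cycles, so these generate the alternating group. For `G` generated by the rotation
cycles, a word is linked with each of its rotations at three consecutive positions, hence with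
every even rearrangement of itself; as `n > |A|` some letter repeats, and swapping two equal
letters makes any rearrangement even. So `G` contains every 3-cycle inside a weight class, hence
every permutation that is even on each weight class. Conversely the generators are 3-cycles
inside a weight class, which are conservative and even on every class. -/

open Equiv Equiv.Perm

section Cycle3

variable {α : Type*} [DecidableEq α] {a b c t : α}

def cycle3 (a b c : α) : Perm α := swap a b * swap b c

lemma cycle3_apply_left (hab : a ≠ b) (hac : a ≠ c) : cycle3 a b c a = b := by
  rw [cycle3, Perm.mul_apply, swap_apply_of_ne_of_ne hab hac, swap_apply_left]

lemma cycle3_apply_mid (hbc : b ≠ c) (hac : a ≠ c) : cycle3 a b c b = c := by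
  rw [cycle3, Perm.mul_apply, swap_apply_left, swap_apply_of_ne_of_ne hac.symm hbc.symm]

lemma cycle3_apply_right : cycle3 a b c c = a := by
  rw [cycle3, Perm.mul_apply, swap_apply_right, swap_apply_right]

lemma cycle3_apply_of_ne (hta : t ≠ a) (htb : t ≠ b) (htc : t ≠ c) : cycle3 a b c t = t := by
  rw [cycle3, Perm.mul_apply, swap_apply_of_ne_of_ne htb htc, swap_apply_of_ne_of_ne hta htb]

lemma conj_cycle3 (σ : Perm α) (a b c : α) :
    σ * cycle3 a b c * σ⁻¹ = cycle3 (σ a) (σ b) (σ c) := by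
  simp only [cycle3, swap_apply_apply]
  group

lemma cycle3_rotate (hab : a ≠ b) (hbc : b ≠ c) (hac : a ≠ c) :
    cycle3 b c a = cycle3 a b c := by
  ext t
  by_cases hta : t = a
  · subst hta; rw [cycle3_apply_right, cycle3_apply_left hab hac]
  by_cases htb : t = b
  · subst htb; rw [cycle3_apply_left hbc hab.symm, cycle3_apply_mid hbc hac]
  by_cases htc : t = c
  · subst htc; rw [cycle3_apply_mid hac.symm hab.symm, cycle3_apply_right]
  rw [cycle3_apply_of_ne htb htc hta, cycle3_apply_of_ne hta htb htc]

lemma cycle3_inv : (cycle3 a b c)⁻¹ = cycle3 c b a := by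
  rw [cycle3, mul_inv_rev, swap_inv, swap_inv, cycle3, swap_comm c b, swap_comm b a]

lemma sign_cycle3 [Fintype α] (hab : a ≠ b) (hbc : b ≠ c) : sign (cycle3 a b c) = 1 := by
  rw [cycle3, map_mul, sign_swap hab, sign_swap hbc, Int.units_mul_self]

lemma Equiv.Perm.IsThreeCycle.exists_eq_cycle3 [Fintype α] {τ : Perm α} (hτ : τ.IsThreeCycle) :
    ∃ a b c, a ≠ b ∧ b ≠ c ∧ a ≠ c ∧ τ = cycle3 a b c := by
  obtain ⟨a, ha⟩ : τ.support.Nonempty := Finset.card_pos.1 (by rw [hτ.card_support]; norm_num)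
  have hnodup := hτ.nodup_iff_mem_support.2 ha
  simp only [List.nodup_cons, List.mem_cons, List.not_mem_nil, or_false, not_or,
    List.nodup_nil] at hnodup
  exact ⟨a, τ a, τ (τ a), hnodup.1.1, hnodup.2.1, hnodup.1.2,
    hτ.eq_swap_mul_swap_iff_mem_support.2 ha⟩

end Cycle3

section Linked

variable {α : Type*} [DecidableEq α] {G : Subgroup (Perm α)} {a b c d : α}

lemma cycle3_mem_rotate (hab : a ≠ b) (hbc : b ≠ c) (hac : a ≠ c) (h : cycle3 a b c ∈ G) :
    cycle3 b c a ∈ G := by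
  rwa [cycle3_rotate hab hbc hac]

lemma cycle3_mem_swap (hab : a ≠ b) (hbc : b ≠ c) (hac : a ≠ c) (h : cycle3 a b c ∈ G) :
    cycle3 b a c ∈ G := by
  rw [cycle3_rotate hbc.symm hab.symm hac.symm, ← cycle3_inv]
  exact G.inv_mem h

lemma cycle3_mem_conj {σ : Perm α} (hσ : σ ∈ G) (h : cycle3 a b c ∈ G) :
    cycle3 (σ a) (σ b) (σ c) ∈ G := by
  rw [← conj_cycle3]
  exact G.mul_mem (G.mul_mem hσ h) (G.inv_mem hσ)

variable (G) in
def CycleLinked (a b : α) : Prop :=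
  a = b ∨ ∃ c, a ≠ b ∧ b ≠ c ∧ a ≠ c ∧ cycle3 a b c ∈ G

lemma cycleLinked_of_cycle3_mem (hab : a ≠ b) (hbc : b ≠ c) (hac : a ≠ c)
    (h : cycle3 a b c ∈ G) : CycleLinked G a b :=
  Or.inr ⟨c, hab, hbc, hac, h⟩

lemma CycleLinked.symm (h : CycleLinked G a b) : CycleLinked G b a := by
  obtain rfl | ⟨c, hab, hbc, hac, h⟩ := h
  · exact Or.inl rfl
  · exact cycleLinked_of_cycle3_mem hab.symm hac hbc (cycle3_mem_swap hab hbc hac h)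

lemma CycleLinked.trans (h₁ : CycleLinked G a b) (h₂ : CycleLinked G b d) :
    CycleLinked G a d := by
  obtain rfl | ⟨c, hab, hbc, hac, h₁⟩ := h₁
  · exact h₂
  obtain rfl | ⟨e, hbd, hde, hbe, h₂⟩ := h₂
  · exact cycleLinked_of_cycle3_mem hab hbc hac h₁
  by_cases had : a = d
  · exact Or.inl had
  by_cases hcd : c = d
  · subst hcd
    exact cycleLinked_of_cycle3_mem had hbc.symm hab
      (cycle3_mem_rotate hab.symm hac hbc (cycle3_mem_swap hab hbc hac h₁))
  by_cases hea : e = a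
  · subst hea
    exact cycleLinked_of_cycle3_mem had hbd.symm hbe.symm
      (cycle3_mem_swap hde hbe.symm hbd.symm (cycle3_mem_rotate hbd hde hbe h₂))
  by_cases hce : c = e
  · subst hce
    have h := cycle3_mem_conj h₁ h₂
    rw [cycle3_apply_mid hbc hac, cycle3_apply_of_ne (Ne.symm had) hbd.symm hde,
      cycle3_apply_right] at h
    exact cycleLinked_of_cycle3_mem had hde hac
      (cycle3_mem_swap (Ne.symm had) hac hde (cycle3_mem_rotate hcd (Ne.symm had) hac.symm h))
  have h := cycle3_mem_conj h₂ h₁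
  rw [cycle3_apply_of_ne hab had (Ne.symm hea), cycle3_apply_left hbd hbe,
    cycle3_apply_of_ne (Ne.symm hbc) hcd hce] at h
  exact cycleLinked_of_cycle3_mem had (Ne.symm hcd) hac h

lemma cycle3_mem_of_cycleLinked (hab : a ≠ b) (hbc : b ≠ c) (hac : a ≠ c)
    (h₁ : CycleLinked G a b) (h₂ : CycleLinked G a c) : cycle3 a b c ∈ G := by
  obtain rfl | ⟨x, -, hbx, hax, h₁⟩ := h₁
  · exact absurd rfl hab
  obtain rfl | ⟨y, -, hcy, hay, h₂⟩ := h₂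
  · exact absurd rfl hac
  by_cases hxc : x = c
  · rwa [← hxc]
  by_cases hyb : y = b
  · subst hyb
    exact cycle3_mem_rotate hac.symm hab hbc.symm (cycle3_mem_swap hac hbc.symm hab h₂)
  by_cases hxy : x = y
  · subst hxy
    have h := cycle3_mem_conj h₁ h₂
    rw [cycle3_apply_left hab hax, cycle3_apply_of_ne hac.symm hbc.symm hcy,
      cycle3_apply_right] at h
    rwa [← cycle3_rotate hab hbc hac]
  have hbcy := cycle3_mem_conj h₁ h₂
  rw [cycle3_apply_left hab hax, cycle3_apply_of_ne hac.symm hbc.symm (Ne.symm hxc),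
    cycle3_apply_of_ne hay.symm hyb (Ne.symm hxy)] at hbcy
  have h := cycle3_mem_conj (G.inv_mem h₂) hbcy
  rw [cycle3_inv, cycle3_apply_of_ne (Ne.symm hyb) hbc (Ne.symm hab),
    cycle3_apply_mid hac.symm hay.symm, cycle3_apply_left hcy.symm hay.symm] at h
  exact cycle3_mem_swap hab.symm hac hbc h

end Linked

section Positions

variable {n : ℕ}

lemma cycleLinked_succ_of_rot3_mem {H : Subgroup (Perm (Fin n))}
    (hH : ∀ (i : Fin n) (hi : (i : ℕ) + 2 < n), rot3 i hi ∈ H) (hn : 3 ≤ n) (k : ℕ)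
    (hk : k + 1 < n) : CycleLinked H ⟨k, by omega⟩ ⟨k + 1, hk⟩ := by
  by_cases hk₂ : k + 2 < n
  · exact cycleLinked_of_cycle3_mem (by simp [Fin.ext_iff]) (by simp [Fin.ext_iff])
      (by simp [Fin.ext_iff]) (hH ⟨k, by omega⟩ hk₂)
  obtain ⟨j, rfl⟩ : ∃ j, k = j + 1 := ⟨k - 1, by omega⟩
  exact cycleLinked_of_cycle3_mem (c := ⟨j, by omega⟩) (by simp [Fin.ext_iff])
    (by simp [Fin.ext_iff]; omega) (by simp [Fin.ext_iff])
    (cycle3_mem_rotate (by simp [Fin.ext_iff]) (by simp [Fin.ext_iff])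
      (by simp [Fin.ext_iff]; omega) (hH ⟨j, by omega⟩ (by omega)))

lemma cycleLinked_of_rot3_mem {H : Subgroup (Perm (Fin n))}
    (hH : ∀ (i : Fin n) (hi : (i : ℕ) + 2 < n), rot3 i hi ∈ H) (hn : 3 ≤ n) (a b : Fin n) :
    CycleLinked H a b := by
  have hzero : ∀ (k : ℕ) (hk : k < n), CycleLinked H ⟨0, by omega⟩ ⟨k, hk⟩ := by
    intro k
    induction k with
    | zero => exact fun _ => Or.inl rfl
    | succ k ih => exact fun hk => (ih (by omega)).trans (cycleLinked_succ_of_rot3_mem hH hn k hk)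
  exact (hzero a a.2).symm.trans (hzero b b.2)

theorem alternatingGroup_le_of_rot3_mem {H : Subgroup (Perm (Fin n))}
    (hH : ∀ (i : Fin n) (hi : (i : ℕ) + 2 < n), rot3 i hi ∈ H) :
    alternatingGroup (Fin n) ≤ H := by
  rw [← closure_three_cycles_eq_alternating, Subgroup.closure_le]
  intro τ hτ
  obtain ⟨a, b, c, hab, hbc, hac, rfl⟩ := hτ.exists_eq_cycle3
  have hn : 3 ≤ n := by
    simp only [ne_eq, Fin.ext_iff] at hab hbc hac
    omega
  exact cycle3_mem_of_cycleLinked hab hbc hac (cycleLinked_of_rot3_mem hH hn a b)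
    (cycleLinked_of_rot3_mem hH hn a c)

end Positions

section Rot3

variable {n : ℕ} (i : Fin n) (hi : (i : ℕ) + 2 < n)

lemma rot3_apply_self : rot3 i hi i = ⟨i + 1, by omega⟩ :=
  cycle3_apply_left (by simp [Fin.ext_iff]) (by simp [Fin.ext_iff])

lemma rot3_apply_succ : rot3 i hi ⟨i + 1, by omega⟩ = ⟨i + 2, hi⟩ :=
  cycle3_apply_mid (by simp [Fin.ext_iff]) (by simp [Fin.ext_iff])

lemma rot3_apply_succ_succ : rot3 i hi ⟨i + 2, hi⟩ = i :=
  cycle3_apply_right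

lemma rot3_apply_of_ne {j : Fin n} (hj₀ : j ≠ i) (hj₁ : j ≠ ⟨i + 1, by omega⟩)
    (hj₂ : j ≠ ⟨i + 2, hi⟩) : rot3 i hi j = j :=
  cycle3_apply_of_ne hj₀ hj₁ hj₂

variable {A : Type*} {i hi} {w : Fin n → A}

lemma comp_rot3_eq_self
    (h : w i = w ⟨i + 1, by omega⟩ ∧ w ⟨i + 1, by omega⟩ = w ⟨i + 2, hi⟩) :
    w ∘ rot3 i hi = w := by
  funext j
  by_cases hj₀ : j = i
  · subst hj₀; simp [rot3_apply_self, h.1]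
  by_cases hj₁ : j = ⟨i + 1, by omega⟩
  · subst hj₁; simp [rot3_apply_succ, h.2]
  by_cases hj₂ : j = ⟨i + 2, hi⟩
  · subst hj₂; simp [rot3_apply_succ_succ, h.1, h.2]
  simp [rot3_apply_of_ne i hi hj₀ hj₁ hj₂]

lemma comp_rot3_ne
    (h : ¬ (w i = w ⟨i + 1, by omega⟩ ∧ w ⟨i + 1, by omega⟩ = w ⟨i + 2, hi⟩)) :
    w ≠ w ∘ rot3 i hi ∧ w ∘ rot3 i hi ≠ w ∘ rot3 i hi ∘ rot3 i hi ∧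
      w ≠ w ∘ rot3 i hi ∘ rot3 i hi := by
  refine ⟨fun e => h ?_, fun e => h ?_, fun e => h ?_⟩
  · have e₀ := congrFun e i
    have e₁ := congrFun e ⟨i + 1, by omega⟩
    simp only [Function.comp_apply, rot3_apply_self, rot3_apply_succ] at e₀ e₁
    exact ⟨e₀, e₁⟩
  · have e₀ := congrFun e i
    have e₂ := congrFun e ⟨i + 2, hi⟩
    simp only [Function.comp_apply, rot3_apply_self, rot3_apply_succ, rot3_apply_succ_succ]
      at e₀ e₂
    exact ⟨e₂, e₀⟩
  · have e₀ := congrFun e i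
    have e₁ := congrFun e ⟨i + 1, by omega⟩
    simp only [Function.comp_apply, rot3_apply_self, rot3_apply_succ, rot3_apply_succ_succ]
      at e₀ e₁
    exact ⟨e₁.symm, e₁.trans e₀⟩

end Rot3

section Words

variable {A : Type*} [DecidableEq A] {n : ℕ}

def rotationCycles (A : Type*) [DecidableEq A] (n : ℕ) : Set (Perm (Fin n → A)) :=
  {s | ∃ (i : Fin n) (hi : (i : ℕ) + 2 < n) (w : Fin n → A),
    ¬ (w i = w ⟨(i : ℕ) + 1, by omega⟩ ∧
      w ⟨(i : ℕ) + 1, by omega⟩ = w ⟨(i : ℕ) + 2, hi⟩) ∧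
    s = cycle3 w (w ∘ rot3 i hi) (w ∘ rot3 i hi ∘ rot3 i hi)}

def linkedStabilizer (G : Subgroup (Perm (Fin n → A))) : Subgroup (Perm (Fin n)) where
  carrier := {σ | ∀ u : Fin n → A, CycleLinked G u (u ∘ σ)}
  mul_mem' {σ τ} hσ hτ u := (hσ u).trans (hτ (u ∘ σ))
  one_mem' _ := Or.inl rfl
  inv_mem' {σ} hσ u := by
    simpa [Function.comp_assoc] using (hσ (u ∘ ⇑σ⁻¹)).symm

lemma rot3_mem_linkedStabilizer (i : Fin n) (hi : (i : ℕ) + 2 < n) :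
    rot3 i hi ∈ linkedStabilizer (Subgroup.closure (rotationCycles A n)) := by
  intro u
  by_cases hu : u i = u ⟨i + 1, by omega⟩ ∧ u ⟨i + 1, by omega⟩ = u ⟨i + 2, hi⟩
  · rw [comp_rot3_eq_self hu]
    exact Or.inl rfl
  · obtain ⟨h₁, h₂, h₃⟩ := comp_rot3_ne hu
    exact cycleLinked_of_cycle3_mem h₁ h₂ h₃ (Subgroup.subset_closure ⟨i, hi, u, hu, rfl⟩)

lemma weight_comp_perm (u : Fin n → A) (σ : Perm (Fin n)) : weight (u ∘ σ) = weight u := by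
  funext a
  exact Finset.card_equiv σ (by simp)

lemma exists_perm_comp_eq_of_weight_eq {u v : Fin n → A} (h : weight u = weight v) :
    ∃ σ : Perm (Fin n), v = u ∘ σ := by
  have e : ∀ a, {i // v i = a} ≃ {i // u i = a} := fun a =>
    Fintype.equivOfCardEq (by simp only [Fintype.card_subtype]; exact (congrFun h a).symm)
  exact ⟨ofFiberEquiv e, funext fun i => (ofFiberEquiv_map e i).symm⟩

lemma comp_swap_eq_self {α β : Type*} [DecidableEq α] {u : α → β} {p q : α}
    (h : u p = u q) : u ∘ swap p q = u := by
  funext j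
  rw [Function.comp_apply, swap_apply_def]
  split_ifs with hp hq
  · rw [hp, h]
  · rw [hq, h]
  · rfl

lemma cycleLinked_of_weight_eq [Fintype A] (hn : Fintype.card A < n) {u v : Fin n → A}
    (h : weight u = weight v) : CycleLinked (Subgroup.closure (rotationCycles A n)) u v := by
  obtain ⟨σ, rfl⟩ := exists_perm_comp_eq_of_weight_eq h
  obtain ⟨p, q, hpq, hu⟩ := Fintype.exists_ne_map_eq_of_card_lt u (by simpa using hn)
  have hle := alternatingGroup_le_of_rot3_mem (rot3_mem_linkedStabilizer (A := A) (n := n))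
  rcases Int.units_eq_one_or (sign σ) with hσ | hσ
  · exact hle hσ u
  · have hsign : swap p q * σ ∈ alternatingGroup (Fin n) := by
      rw [mem_alternatingGroup, map_mul, hσ, sign_swap hpq, Int.units_mul_self]
    simpa [← Function.comp_assoc, comp_swap_eq_self hu] using hle hsign u

theorem cycle3_mem_closure_rotationCycles [Fintype A] (hn : Fintype.card A < n)
    {x y z : Fin n → A} (hxy : x ≠ y) (hyz : y ≠ z) (hxz : x ≠ z)
    (hwy : weight x = weight y) (hwz : weight x = weight z) :
    cycle3 x y z ∈ Subgroup.closure (rotationCycles A n) :=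
  cycle3_mem_of_cycleLinked hxy hyz hxz (cycleLinked_of_weight_eq hn hwy)
    (cycleLinked_of_weight_eq hn hwz)

end Words

section AltConservative

variable {A : Type*} [DecidableEq A] {n : ℕ}

lemma isConservative_swap {x y : Fin n → A} (h : weight x = weight y) :
    IsConservative (swap x y) := by
  intro t
  rw [swap_apply_def]
  split_ifs with hx hy
  · rw [hx, h]
  · rw [hy, h]
  · rfl

lemma IsConservative.mul {f g : Perm (Fin n → A)} (hf : IsConservative f)
    (hg : IsConservative g) : IsConservative (f * g) :=
  fun x => (hf (g x)).trans (hg x)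

lemma IsConservative.inv {f : Perm (Fin n → A)} (hf : IsConservative f) :
    IsConservative f⁻¹ :=
  fun x => by simpa using (hf (f⁻¹ x)).symm

lemma sign_subtypePerm_cycle3 {α : Type*} [DecidableEq α] [Fintype α] {p : α → Prop}
    [DecidablePred p] {x y z : α} (hxy : x ≠ y) (hyz : y ≠ z) (hxz : x ≠ z)
    (h : ∀ t, p (cycle3 x y z t) ↔ p t) : sign ((cycle3 x y z).subtypePerm h) = 1 := by
  have hpy : p y ↔ p x := by simpa only [cycle3_apply_left hxy hxz] using h x
  have hpz : p z ↔ p y := by simpa only [cycle3_apply_mid hyz hxz] using h y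
  by_cases hpx : p x
  · rw [sign_subtypePerm _ h, sign_cycle3 hxy hyz]
    intro t ht
    by_cases htx : t = x
    · rwa [htx]
    by_cases hty : t = y
    · rwa [hty, hpy]
    by_cases htz : t = z
    · rwa [htz, hpz, hpy]
    exact absurd (cycle3_apply_of_ne htx hty htz) ht
  · convert sign_one (α := {t // p t})
    ext ⟨t, ht⟩
    have htx : t ≠ x := by rintro rfl; exact hpx ht
    have hty : t ≠ y := by rintro rfl; exact hpx (hpy.1 ht)
    have htz : t ≠ z := by rintro rfl; exact hpx (hpy.1 (hpz.1 ht))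
    simp [cycle3_apply_of_ne htx hty htz]

variable [Fintype A]

lemma altConservative_cycle3 {x y z : Fin n → A} (hxy : x ≠ y) (hyz : y ≠ z) (hxz : x ≠ z)
    (hwy : weight x = weight y) (hwz : weight x = weight z) : AltConservative (cycle3 x y z) :=
  ⟨(isConservative_swap hwy).mul (isConservative_swap (hwy.symm.trans hwz)),
    fun _ => sign_subtypePerm_cycle3 hxy hyz hxz _⟩

variable (A n) in
def altConservativeSubgroup : Subgroup (Perm (Fin n → A)) where
  carrier := {g | AltConservative g}
  one_mem' := ⟨fun _ => rfl, fun _ => map_one sign⟩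
  mul_mem' := by
    rintro f g ⟨hf, hfs⟩ ⟨hg, hgs⟩
    refine ⟨hf.mul hg, fun w => ?_⟩
    rw [← subtypePerm_mul f g (fun x => by rw [hf x]) (fun x => by rw [hg x]), map_mul, hfs,
      hgs, mul_one]
  inv_mem' := by
    rintro f ⟨hf, hfs⟩
    refine ⟨hf.inv, fun w => ?_⟩
    rw [subtypePerm_inv, map_inv, hfs, inv_one]

lemma closure_rotationCycles_le_altConservativeSubgroup :
    Subgroup.closure (rotationCycles A n) ≤ altConservativeSubgroup A n := by
  rw [Subgroup.closure_le]
  rintro _ ⟨i, hi, w, hw, rfl⟩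
  obtain ⟨h₁, h₂, h₃⟩ := comp_rot3_ne hw
  exact altConservative_cycle3 h₁ h₂ h₃ (weight_comp_perm w _).symm
    (weight_comp_perm w (rot3 i hi * rot3 i hi)).symm

lemma ofSubtype_cycle3 {α : Type*} [DecidableEq α] {p : α → Prop} [DecidablePred p]
    (a b c : Subtype p) : ofSubtype (cycle3 a b c) = cycle3 a.1 b.1 c.1 := by
  rw [cycle3, cycle3, map_mul, ofSubtype_swap_eq, ofSubtype_swap_eq]

lemma ofSubtype_mem_closure_rotationCycles (hn : Fintype.card A < n) {w : A → ℕ}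
    {τ : Perm {x : Fin n → A // weight x = w}} (hτ : τ ∈ alternatingGroup _) :
    ofSubtype τ ∈ Subgroup.closure (rotationCycles A n) := by
  rw [← closure_three_cycles_eq_alternating] at hτ
  refine (Subgroup.closure_le (K := (Subgroup.closure (rotationCycles A n)).comap ofSubtype)).2
    (fun τ hτ => ?_) hτ
  obtain ⟨a, b, c, hab, hbc, hac, rfl⟩ := hτ.exists_eq_cycle3
  change ofSubtype (cycle3 a b c) ∈ Subgroup.closure (rotationCycles A n)
  rw [ofSubtype_cycle3]
  exact cycle3_mem_closure_rotationCycles hn (Subtype.coe_ne_coe.2 hab) (Subtype.coe_ne_coe.2 hbc)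
    (Subtype.coe_ne_coe.2 hac) (a.2.trans b.2.symm) (a.2.trans c.2.symm)

theorem mem_closure_rotationCycles_of_altConservative (hn : Fintype.card A < n)
    {g : Perm (Fin n → A)} (hg : AltConservative g) :
    g ∈ Subgroup.closure (rotationCycles A n) := by
  suffices h : ∀ S : Finset (A → ℕ), ∀ g ∈ altConservativeSubgroup A n,
      (∀ x, g x ≠ x → weight x ∈ S) → g ∈ Subgroup.closure (rotationCycles A n) from
    h _ g hg fun x _ => Finset.mem_image_of_mem weight (Finset.mem_univ x)
  intro S
  induction S using Finset.induction_on with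
  | empty =>
    intro g _ hS
    rw [show g = 1 from Equiv.ext fun x => not_not.1 fun hx => by simpa using hS x hx]
    exact one_mem _
  | insert w S _ ih =>
    intro g hg hS
    obtain ⟨hc, hsign⟩ := hg
    set σ := ofSubtype (g.subtypePerm (p := fun x => weight x = w) fun x => by rw [hc x])
    have hσ : σ ∈ Subgroup.closure (rotationCycles A n) :=
      ofSubtype_mem_closure_rotationCycles hn (mem_alternatingGroup.2 (hsign w))
    have hσg : σ⁻¹ * g ∈ Subgroup.closure (rotationCycles A n) := by
      refine ih _ (mul_mem (inv_mem (closure_rotationCycles_le_altConservativeSubgroup hσ))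
        ⟨hc, hsign⟩) fun x hx => ?_
      rw [Perm.mul_apply, Ne, Perm.inv_eq_iff_eq] at hx
      have hxw : weight x ≠ w := fun hxw =>
        hx (ofSubtype_subtypePerm_of_mem (p := fun y => weight y = w) _ hxw).symm
      have hgx : g x ≠ x := fun hgx =>
        hx (by rw [hgx, ofSubtype_subtypePerm_of_not_mem (p := fun y => weight y = w) _ hxw])
      exact (Finset.mem_insert.1 (hS x hgx)).resolve_left hxw
    simpa using mul_mem hσ hσg

end AltConservative

/-- for `n > |A|`, the subgroup of `Sym(A^n)` generated by the `3`-cycles of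
words `(x·a·b·c·y, x·b·c·a·y, x·c·a·b·y)` (with `a, b, c` not all equal) obtained from one
another by rotating three consecutive symbols equals the set of conservative permutations of
`A^n` that are even on each weight class. -/
theorem stmt16 (A : Type*) [Fintype A] [DecidableEq A] (n : ℕ) (hn : Fintype.card A < n)
    (g : Equiv.Perm (Fin n → A)) :
    g ∈ Subgroup.closure {s : Equiv.Perm (Fin n → A) |
        ∃ (i : Fin n) (hi : (i : ℕ) + 2 < n) (w : Fin n → A),
          ¬ (w i = w ⟨(i : ℕ) + 1, by omega⟩ ∧
             w ⟨(i : ℕ) + 1, by omega⟩ = w ⟨(i : ℕ) + 2, hi⟩) ∧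
          s = Equiv.swap w (fun j => w (rot3 i hi j)) *
              Equiv.swap (fun j => w (rot3 i hi j)) (fun j => w (rot3 i hi (rot3 i hi j)))} ↔
      AltConservative g :=
  -- the generating set is `rotationCycles A n` with `cycle3` unfolded
  ⟨fun hg => closure_rotationCycles_le_altConservativeSubgroup hg,
    mem_closure_rotationCycles_of_altConservative hn⟩
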